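/- arXiv:quant-ph/9807045 — 3 statements merged into one kernel-verified Lean document; each statement's English description precedes it below -/
import Mathlib

section
/- The baker covering map β on ℝ² covers the classical baker's map b on the unit square: for every (x,p) ∈ ℝ², writing β(x,p) = (x',p'), one has (fract(x'), fract(p')) = b(fract(x), fract(p)). -/
lemma fract_eq_of_eq_add_int (a b : ℝ) (n : ℤ) (h : a = b + n) (h0 : 0 ≤ b) (h1 : b < 1) :
    Int.fract a = b := by
  rw [h, Int.fract_add_intCast, Int.fract_eq_self.2 ⟨h0, h1⟩]


/-- The baker covering map `β : ℝ² → ℝ²`. -/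
noncomputable def bakerCover (q : ℝ × ℝ) : ℝ × ℝ :=
  if Int.fract q.1 < 1/2 then
    if Even ⌊q.2⌋ then (2 * q.1, q.2 / 2) else (2 * q.1 + 1, q.2 / 2 + 1/2)
  else
    if Even ⌊q.2⌋ then (2 * q.1 - 1, q.2 / 2 + 1/2) else (2 * q.1, q.2 / 2)

/-- The classical baker's map on the unit square `[0,1) × [0,1)`. -/
noncomputable def bakerMap (q : ℝ × ℝ) : ℝ × ℝ :=
  if q.1 < 1/2 then (2 * q.1, q.2 / 2) else (2 * q.1 - 1, q.2 / 2 + 1/2)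

/-- The baker covering map covers the classical baker's map: taking fractional parts
of the image of `β` gives the baker's map applied to the fractional parts. -/
theorem bakerCover_covers_bakerMap :
    ∀ x p : ℝ,
      (Int.fract (bakerCover (x, p)).1, Int.fract (bakerCover (x, p)).2)
        = bakerMap (Int.fract x, Int.fract p) := by
  intro x p
  have hx0 := Int.fract_nonneg x
  have hx1 := Int.fract_lt_one x
  have hp0 := Int.fract_nonneg p
  have hp1 := Int.fract_lt_one p
  have hx : x = Int.fract x + ⌊x⌋ := by rw [Int.fract]; ring
  have hp : p = Int.fract p + ⌊p⌋ := by rw [Int.fract]; ring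
  rcases lt_or_ge (Int.fract x) (1/2) with h1 | h1 <;>
    rcases Int.even_or_odd ⌊p⌋ with ⟨k, hk⟩ | ⟨k, hk⟩
  · have heven : Even ⌊p⌋ := ⟨k, hk⟩
    simp only [bakerCover, bakerMap, if_pos h1, if_pos heven, Prod.mk.injEq]
    constructor
    · exact fract_eq_of_eq_add_int _ _ (2 * ⌊x⌋) (by push_cast; linarith) (by linarith) (by linarith)
    · refine fract_eq_of_eq_add_int _ _ k ?_ (by linarith) (by linarith)
      have : (⌊p⌋ : ℝ) = k + k := by exact_mod_cast congrArg Int.cast hk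
      push_cast
      linarith
  · have hodd : ¬ Even ⌊p⌋ := by rw [hk]; exact Int.not_even_iff_odd.mpr ⟨k, rfl⟩
    simp only [bakerCover, bakerMap, if_pos h1, if_neg hodd, Prod.mk.injEq]
    constructor
    · exact fract_eq_of_eq_add_int _ _ (2 * ⌊x⌋ + 1) (by push_cast; linarith) (by linarith)
        (by linarith)
    · refine fract_eq_of_eq_add_int _ _ (k + 1) ?_ (by linarith) (by linarith)
      have : (⌊p⌋ : ℝ) = 2 * k + 1 := by exact_mod_cast congrArg Int.cast hk
      push_cast
      linarith
  · have heven : Even ⌊p⌋ := ⟨k, hk⟩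
    simp only [bakerCover, bakerMap, if_neg (not_lt.mpr h1), if_pos heven, Prod.mk.injEq]
    constructor
    · exact fract_eq_of_eq_add_int _ _ (2 * ⌊x⌋) (by push_cast; linarith)
        (by linarith) (by linarith)
    · refine fract_eq_of_eq_add_int _ _ k ?_ (by linarith) (by linarith)
      have : (⌊p⌋ : ℝ) = k + k := by exact_mod_cast congrArg Int.cast hk
      push_cast
      linarith
  · have hodd : ¬ Even ⌊p⌋ := by rw [hk]; exact Int.not_even_iff_odd.mpr ⟨k, rfl⟩
    simp only [bakerCover, bakerMap, if_neg (not_lt.mpr h1), if_neg hodd, Prod.mk.injEq]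
    constructor
    · exact fract_eq_of_eq_add_int _ _ (2 * ⌊x⌋ + 1) (by push_cast; linarith)
        (by linarith) (by linarith)
    · refine fract_eq_of_eq_add_int _ _ k ?_ (by linarith) (by linarith)
      have : (⌊p⌋ : ℝ) = 2 * k + 1 := by exact_mod_cast congrArg Int.cast hk
      push_cast
      linarith
end

section
/- Pullback of harmonics under the baker covering map: for all integers a, b and all (x,p) ∈ ℝ², writing β(x,p) = (x',p'), one has e^{2πi(a x' + b p')} = e^{4πi a x} · e^{iπ b p} · (χ_l(x) + (−1)^b χ_r(x)) · (χ_e(p) + (−1)^b χ_o(p)). -/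
/-- Indicator of `⋃ₖ [k, k+1/2)` (the "left" region). -/
noncomputable def chiL (x : ℝ) : ℂ := if Int.fract x < 1/2 then 1 else 0

/-- Indicator of `⋃ₖ [k+1/2, k+1)` (the "right" region). -/
noncomputable def chiR (x : ℝ) : ℂ := if 1/2 ≤ Int.fract x then 1 else 0

/-- Indicator of `⋃ₖ [2k, 2k+1)` (the "even" region). -/
noncomputable def chiE (p : ℝ) : ℂ := if Even ⌊p⌋ then 1 else 0

/-- Indicator of `⋃ₖ [2k+1, 2k+2)` (the "odd" region). -/
noncomputable def chiO (p : ℝ) : ℂ := if Odd ⌊p⌋ then 1 else 0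

lemma exp_pi_I_int (n : ℤ) : Complex.exp ((n : ℂ) * (Real.pi * Complex.I)) = (-1 : ℂ) ^ n := by
  rw [Complex.exp_int_mul, Complex.exp_pi_mul_I]

lemma exp_two_pi_I_int (n : ℤ) :
    Complex.exp ((n : ℂ) * (2 * Real.pi * Complex.I)) = 1 := by
  simpa [mul_comm, mul_assoc, mul_left_comm] using Complex.exp_int_mul_two_pi_mul_I n

/-- Pullback of harmonics under the baker covering map:
`e^{2πi(a x' + b p')} = e^{4πi a x} e^{iπ b p} (χ_l(x) + (−1)^b χ_r(x)) (χ_e(p) + (−1)^b χ_o(p))`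
where `(x', p') = β(x, p)`. -/
theorem bakerCover_pullback_harmonic (a b : ℤ) (x p : ℝ) :
    Complex.exp (2 * Real.pi * Complex.I *
        ((a : ℂ) * ((bakerCover (x, p)).1 : ℂ) + (b : ℂ) * ((bakerCover (x, p)).2 : ℂ)))
      = Complex.exp (4 * Real.pi * Complex.I * (a : ℂ) * (x : ℂ)) *
        Complex.exp (Real.pi * Complex.I * (b : ℂ) * (p : ℂ)) *
        (chiL x + (-1 : ℂ) ^ b * chiR x) *
        (chiE p + (-1 : ℂ) ^ b * chiO p) := by
  have hneg : ((-1:ℂ)) ^ b * (-1) ^ b = 1 := by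
    rw [← zpow_add₀ (by norm_num : (-1:ℂ) ≠ 0)]
    exact Even.neg_one_zpow ⟨b, rfl⟩
  by_cases hx : Int.fract x < 1/2 <;> by_cases hp : Even ⌊p⌋
  · simp only [bakerCover, chiL, chiR, chiE, chiO, hx, hp, Int.not_even_iff_odd.symm,
      not_le.mpr hx, if_true, if_false, if_pos, if_neg, not_false_iff, mul_zero, add_zero,
      mul_one, not_not]
    rw [← Complex.exp_add]
    congr 1
    push_cast
    ring
  · simp only [bakerCover, chiL, chiR, chiE, chiO, hx, hp, Int.not_even_iff_odd.symm,
      not_le.mpr hx, if_true, if_false, if_pos, if_neg, not_false_iff, mul_zero, add_zero,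
      zero_add, mul_one, not_not]
    have hL : (2 * (Real.pi:ℂ) * Complex.I * ((a:ℂ) * ((2*x+1 : ℝ):ℂ) + (b:ℂ) * ((p/2+1/2 : ℝ):ℂ)))
        = (4 * Real.pi * Complex.I * a * x + Real.pi * Complex.I * b * p + (b:ℂ)*(Real.pi*Complex.I))
          + (a:ℂ)*(2*Real.pi*Complex.I) := by push_cast; ring
    rw [hL, Complex.exp_add, Complex.exp_add, Complex.exp_add, exp_two_pi_I_int, exp_pi_I_int,
      mul_one]
  · simp only [bakerCover, chiL, chiR, chiE, chiO, hx, hp, Int.not_even_iff_odd.symm,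
      not_lt.mp hx, if_true, if_false, if_pos, if_neg, not_false_iff, mul_zero, add_zero,
      zero_add, mul_one, not_not]
    have hL : (2 * (Real.pi:ℂ) * Complex.I * ((a:ℂ) * ((2*x-1 : ℝ):ℂ) + (b:ℂ) * ((p/2+1/2 : ℝ):ℂ)))
        = (4 * Real.pi * Complex.I * a * x + Real.pi * Complex.I * b * p + (b:ℂ)*(Real.pi*Complex.I))
          + ((-a : ℤ):ℂ)*(2*Real.pi*Complex.I) := by push_cast; ring
    rw [hL, Complex.exp_add, Complex.exp_add, Complex.exp_add, exp_two_pi_I_int, exp_pi_I_int,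
      mul_one]
  · simp only [bakerCover, chiL, chiR, chiE, chiO, hx, hp, Int.not_even_iff_odd.symm,
      not_lt.mp hx, if_true, if_false, if_pos, if_neg, not_false_iff, mul_zero, add_zero,
      zero_add, mul_one, not_not]
    rw [mul_assoc (Complex.exp _ * Complex.exp _), hneg, mul_one, ← Complex.exp_add]
    congr 1
    push_cast
    ring
end

section
/- Classical parity symmetry of the baker dynamics: let s(x,p) = (1−x, 1−p). For every (x,p) ∈ ℝ² such that 2x ∉ ℤ and p ∉ ℤ, the points β(s(x,p)) and s(β(x,p)) agree modulo ℤ², i.e. both components of β(s(x,p)) − s(β(x,p)) are integers; equivalently, fract applied componentwise to β(s(x,p)) equals fract applied componentwise to s(β(x,p)). -/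
/-- The parity map `s(x,p) = (1−x, 1−p)`. -/
noncomputable def parityMap (q : ℝ × ℝ) : ℝ × ℝ := (1 - q.1, 1 - q.2)

section FloorRing

variable {R : Type*} [Ring R] [LinearOrder R] [IsStrictOrderedRing R] [FloorRing R]

theorem Int.floor_one_sub_of_notMem {p : R} (hp : p ∉ Set.range Int.cast) :
    ⌊1 - p⌋ = -⌊p⌋ := by
  rw [sub_eq_neg_add, Int.floor_add_one, Int.floor_neg,
    (Int.ceil_eq_floor_add_one_iff_notMem p).mpr hp]
  ring

theorem Int.even_floor_one_sub_iff {p : R} (hp : p ∉ Set.range Int.cast) :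
    Even ⌊1 - p⌋ ↔ Even ⌊p⌋ := by
  rw [Int.floor_one_sub_of_notMem hp, even_neg]

end FloorRing

theorem Int.fract_one_sub_lt_half_iff {k : Type*} [Field k] [LinearOrder k]
    [IsStrictOrderedRing k] [FloorRing k] {x : k} (hx : 2 * x ∉ Set.range Int.cast) :
    Int.fract (1 - x) < 1 / 2 ↔ ¬ Int.fract x < 1 / 2 := by
  have hx_eq := Int.floor_add_fract x
  have h_ne_zero : Int.fract x ≠ 0 := fun h =>
    hx ⟨2 * ⌊x⌋, by push_cast; linarith⟩
  have h_ne_half : Int.fract x ≠ 1 / 2 := fun h =>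
    hx ⟨2 * ⌊x⌋ + 1, by push_cast; linarith⟩
  rw [sub_eq_neg_add, Int.fract_add_one, Int.fract_neg h_ne_zero, not_lt]
  constructor
  · intro h; linarith
  · intro h; linarith [lt_of_le_of_ne h (Ne.symm h_ne_half)]

theorem bakerCover_parityMap {x p : ℝ} (hx : 2 * x ∉ Set.range Int.cast)
    (hp : p ∉ Set.range Int.cast) :
    bakerCover (parityMap (x, p)) =
      parityMap (bakerCover (x, p)) + (((if Even ⌊p⌋ then 0 else 2 : ℤ) : ℝ), 0) := by
  simp only [bakerCover, parityMap, Int.fract_one_sub_lt_half_iff hx,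
    Int.even_floor_one_sub_iff hp]
  split_ifs <;> ext <;> simp only [Prod.fst_add, Prod.snd_add] <;> push_cast <;> ring

/-- Classical parity symmetry of the baker dynamics: away from the discontinuity set
(`2x ∉ ℤ` and `p ∉ ℤ`), `β(s(x,p))` and `s(β(x,p))` agree modulo `ℤ²`: both components
of their difference are integers; equivalently, the componentwise fractional parts agree. -/
theorem bakerCover_parity_symmetry (x p : ℝ)
    (hx : ∀ k : ℤ, 2 * x ≠ (k : ℝ)) (hp : ∀ k : ℤ, p ≠ (k : ℝ)) :
    (∃ a b : ℤ,
        (bakerCover (parityMap (x, p))).1 - (parityMap (bakerCover (x, p))).1 = (a : ℝ) ∧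
        (bakerCover (parityMap (x, p))).2 - (parityMap (bakerCover (x, p))).2 = (b : ℝ)) ∧
      Int.fract (bakerCover (parityMap (x, p))).1
          = Int.fract (parityMap (bakerCover (x, p))).1 ∧
      Int.fract (bakerCover (parityMap (x, p))).2
          = Int.fract (parityMap (bakerCover (x, p))).2 := by
  rw [bakerCover_parityMap (fun ⟨k, hk⟩ => hx k hk.symm) (fun ⟨k, hk⟩ => hp k hk.symm)]
  refine ⟨⟨_, 0, add_sub_cancel_left _ _, by simp⟩, Int.fract_add_intCast _ _, by simp⟩
end
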